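/- arXiv:2508.14671 — 2 statements merged into one kernel-verified Lean document; each statement's English description precedes it below -/
import Mathlib

section
/- Let Γ = (G,I,O,λ) be a labelled open graph with a focused Pauli flow (c,≺) and let x ∈ V∖O satisfy λ(x)=XY. Let Γ' be the YZ-insertion of a fresh vertex z with neighbourhood S = {x} into Γ. Then Γ' has a focused Pauli flow (c',≺'), where c' is the extension of c with c'(z) = c(x)∪{z}, and ≺' = ≺ ∪ {(w,z) : w ≺ x} ∪ {(z,v) : x ≺ v}. -/
open scoped Classical
noncomputable section

inductive MLabel : Type
  | X | Y | Z | XY | XZ | YZ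
  deriving DecidableEq

variable {V : Type*}

/-- The odd neighbourhood of a set `A`: vertices with an odd number of neighbours in `A`. -/
def oddN (G : SimpleGraph V) (A : Set V) : Set V :=
  {v | Odd ((A ∩ G.neighborSet v).ncard)}

/-- The closed odd neighbourhood of a set `A`. -/
def cOddN (G : SimpleGraph V) (A : Set V) : Set V :=
  symmDiff (oddN G A) A

/-- A Pauli flow on the labelled open graph `(G, I, O, lab)`. -/
structure IsPauliFlow (G : SimpleGraph V) (I O : Set V) (lab : V → MLabel)
    (c : V → Set V) (prec : V → V → Prop) : Prop where
  corr_sub : ∀ u, u ∉ O → c u ⊆ Iᶜ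
  irrefl : ∀ u, ¬ prec u u
  trans : ∀ ⦃a b d⦄, prec a b → prec b d → prec a d
  p1 : ∀ u, u ∉ O → ∀ v ∈ c u, v ∉ O → u ≠ v →
    lab v ∉ ({MLabel.X, MLabel.Y} : Set MLabel) → prec u v
  p2 : ∀ u, u ∉ O → ∀ v ∈ oddN G (c u), v ∉ O → u ≠ v →
    lab v ∉ ({MLabel.Y, MLabel.Z} : Set MLabel) → prec u v
  p3 : ∀ u, u ∉ O → ∀ v, v ∉ O → ¬ prec u v → u ≠ v → lab v = MLabel.Y →
    v ∉ cOddN G (c u)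
  p4 : ∀ u, u ∉ O → lab u = MLabel.XY → u ∉ c u ∧ u ∈ oddN G (c u)
  p5 : ∀ u, u ∉ O → lab u = MLabel.XZ → u ∈ c u ∧ u ∈ oddN G (c u)
  p6 : ∀ u, u ∉ O → lab u = MLabel.YZ → u ∈ c u ∧ u ∉ oddN G (c u)
  p7 : ∀ u, u ∉ O → lab u = MLabel.X → u ∈ oddN G (c u)
  p8 : ∀ u, u ∉ O → lab u = MLabel.Z → u ∈ c u
  p9 : ∀ u, u ∉ O → lab u = MLabel.Y → u ∈ cOddN G (c u)

/-- `A` is focused over `S`. -/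
def FocusedOver (G : SimpleGraph V) (lab : V → MLabel) (A S : Set V) : Prop :=
  (∀ w ∈ S ∩ A, lab w ∈ ({MLabel.XY, MLabel.X, MLabel.Y} : Set MLabel)) ∧
  (∀ w ∈ S ∩ oddN G A, lab w ∈ ({MLabel.XZ, MLabel.YZ, MLabel.Y, MLabel.Z} : Set MLabel)) ∧
  (∀ w ∈ S, lab w = MLabel.Y → w ∉ cOddN G A)

/-- A focused Pauli flow. -/
def IsFocusedPauliFlow (G : SimpleGraph V) (I O : Set V) (lab : V → MLabel)
    (c : V → Set V) (prec : V → V → Prop) : Prop :=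
  IsPauliFlow G I O lab c prec ∧ ∀ v, v ∉ O → FocusedOver G lab (c v) (Oᶜ \ {v})

def HasPauliFlow (G : SimpleGraph V) (I O : Set V) (lab : V → MLabel) : Prop :=
  ∃ c prec, IsPauliFlow G I O lab c prec

/-- The graph that results from inserting a fresh vertex (`none`) with
neighbourhood `S` into `G`. -/
def insertGraph (G : SimpleGraph V) (S : Set V) : SimpleGraph (Option V) where
  Adj a b := match a, b with
    | some x, some y => G.Adj x y
    | some x, none => x ∈ S
    | none, some y => y ∈ S
    | none, none => False
  symm := by
    constructor
    rintro (_ | x) (_ | y) h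
    · exact h
    · exact h
    · exact h
    · exact G.symm.symm _ _ h
  loopless := by
    constructor
    rintro (_ | x) h
    · exact h
    · exact G.loopless.irrefl x h

/-- The measurement labelling after inserting a fresh vertex measured `ℓ`. -/
def insertLab (lab : V → MLabel) (ℓ : MLabel) : Option V → MLabel
  | none => ℓ
  | some v => lab v

/-- The set 𝒳 of X-like internal vertices. -/
def mX (I O : Set V) (lab : V → MLabel) : Set V :=
  {v | v ∉ I ∧ v ∉ O ∧ lab v ∈ ({MLabel.XY, MLabel.X, MLabel.Y} : Set MLabel)}

/-- The set ℒ of planar-measured internal vertices. -/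
def mL (I O : Set V) (lab : V → MLabel) : Set V :=
  {v | v ∉ I ∧ v ∉ O ∧ lab v ∈ ({MLabel.XY, MLabel.XZ, MLabel.YZ} : Set MLabel)}


section Helpers
variable {V : Type*} [Fintype V] (G : SimpleGraph V) (x : V)

lemma mem_some_image {A : Set V} {v : V} : some v ∈ some '' A ↔ v ∈ A :=
  (Option.some_injective V).mem_set_image

lemma adj_some_some {v w : V} :
    (insertGraph G {x}).Adj (some v) (some w) ↔ G.Adj v w := Iff.rfl

lemma adj_some_none {v : V} :
    (insertGraph G {x}).Adj (some v) none ↔ v = x := by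
  show v ∈ ({x} : Set V) ↔ v = x
  simp

lemma inter_nbhd_some (A : Set V) (v : V) :
    (some '' A) ∩ (insertGraph G {x}).neighborSet (some v)
      = some '' (A ∩ G.neighborSet v) := by
  ext (_ | w)
  · simp
  · simp only [Set.mem_inter_iff, mem_some_image, SimpleGraph.mem_neighborSet,
      adj_some_some, Set.mem_inter_iff]

lemma odd_some_iff (A : Set V) (v : V) :
    some v ∈ oddN (insertGraph G {x}) (some '' A) ↔ v ∈ oddN G A := by
  unfold oddN
  simp only [Set.mem_setOf_eq, inter_nbhd_some,
    Set.ncard_image_of_injective _ (Option.some_injective V)]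

lemma odd_none_iff' (A : Set (Option V)) :
    none ∈ oddN (insertGraph G {x}) A ↔ some x ∈ A := by
  have hn : (insertGraph G {x}).neighborSet none = {some x} := by
    ext (_ | w)
    · simp only [SimpleGraph.mem_neighborSet, Set.mem_singleton_iff]
      constructor
      · exact fun h => absurd h ((insertGraph G {x}).loopless.irrefl none)
      · intro h; exact absurd h (by simp)
    · simp only [SimpleGraph.mem_neighborSet, Set.mem_singleton_iff,
        Option.some.injEq]
      show w ∈ ({x} : Set V) ↔ w = x
      simp
  unfold oddN
  rw [Set.mem_setOf_eq, hn]
  by_cases h : some x ∈ A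
  · rw [Set.inter_eq_self_of_subset_right (by simpa using h)]
    simpa using h
  · rw [Set.inter_singleton_eq_empty.2 h]
    simpa using h

lemma odd_some_insert_ne (A : Set V) (v : V) (hv : v ≠ x) :
    some v ∈ oddN (insertGraph G {x}) (insert none (some '' A)) ↔ v ∈ oddN G A := by
  have : (insert none (some '' A)) ∩ (insertGraph G {x}).neighborSet (some v)
      = (some '' A) ∩ (insertGraph G {x}).neighborSet (some v) := by
    rw [Set.insert_inter_of_notMem]
    simp only [SimpleGraph.mem_neighborSet, adj_some_none G x]
    exact hv
  unfold oddN
  rw [Set.mem_setOf_eq, this, ← Set.mem_setOf_eq (p := fun y => Odd _)]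
  exact odd_some_iff G x A v

lemma odd_some_insert_eq (A : Set V) :
    some x ∈ oddN (insertGraph G {x}) (insert none (some '' A)) ↔ x ∉ oddN G A := by
  have hmem : none ∈ (insertGraph G {x}).neighborSet (some x) := by
    simp [SimpleGraph.mem_neighborSet, adj_some_none G x]
  have : (insert none (some '' A)) ∩ (insertGraph G {x}).neighborSet (some x)
      = insert none ((some '' A) ∩ (insertGraph G {x}).neighborSet (some x)) := by
    rw [Set.insert_inter_of_mem hmem]
  unfold oddN
  rw [Set.mem_setOf_eq, this, Set.ncard_insert_of_notMem (by simp) (Set.toFinite _),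
    inter_nbhd_some, Set.ncard_image_of_injective _ (Option.some_injective V),
    Nat.odd_add_one]
  simp [oddN, Nat.not_odd_iff_even]

end Helpers

section Helpers2
variable {V : Type*} [Fintype V] (G : SimpleGraph V) (x : V)

lemma codd_some_iff (A : Set V) (v : V) :
    some v ∈ cOddN (insertGraph G {x}) (some '' A) ↔ v ∈ cOddN G A := by
  simp [cOddN, Set.mem_symmDiff, odd_some_iff, mem_some_image]

lemma codd_some_insert_ne (A : Set V) (v : V) (hv : v ≠ x) :
    some v ∈ cOddN (insertGraph G {x}) (insert none (some '' A)) ↔ v ∈ cOddN G A := by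
  simp [cOddN, Set.mem_symmDiff, odd_some_insert_ne G x A v hv, mem_some_image, hv]

end Helpers2

/-- inserting a YZ-measured vertex `z = none` with a single
XY-measured neighbour `x` preserves focused Pauli flow, with `c'(z) = c(x) ∪ {z}`
and `prec' = prec ∪ {(w,z) : w ≺ x} ∪ {(z,v) : x ≺ v}`. -/
theorem yz_insertion_single_neighbour {V : Type*} [Fintype V]
    (G : SimpleGraph V) (I O : Set V) (lab : V → MLabel)
    (c : V → Set V) (prec : V → V → Prop)
    (hflow : IsFocusedPauliFlow G I O lab c prec)
    (x : V) (hx : x ∉ O) (hlx : lab x = MLabel.XY) :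
    IsFocusedPauliFlow (insertGraph G {x}) (some '' I) (some '' O)
      (insertLab lab MLabel.YZ)
      (fun a => Option.elim a (insert none (some '' (c x))) (fun v => some '' (c v)))
      (fun a b => match a, b with
        | some a, some b => prec a b
        | some a, none => prec a x
        | none, some b => prec x b
        | none, none => False) := by
  classical
  obtain ⟨hPF, hfoc⟩ := hflow
  have hx4 := hPF.p4 x hx hlx
  have hxc : x ∉ c x := hx4.1
  have hxodd : x ∈ oddN G (c x) := hx4.2
  have hlxXY : lab x ∉ ({MLabel.X, MLabel.Y} : Set MLabel) := by simp [hlx]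
  have hkey : ∀ u, u ∉ O → x ∈ c u → prec u x := by
    intro u hu hxu
    have hux : u ≠ x := by rintro rfl; exact hxc hxu
    exact hPF.p1 u hu x hxu hx hux hlxXY
  constructor
  · refine ⟨?_, ?_, ?_, ?_, ?_, ?_, ?_, ?_, ?_, ?_, ?_, ?_⟩
    -- corr_sub
    · rintro (_ | u) hu (_ | w) hw <;> simp only [Option.elim_none, Option.elim_some] at hw ⊢
      · simp at hw
        simp
      · simp at hw
        simpa using hPF.corr_sub x hx hw
      · simp at hw
      · simp at hw
        have hu' : u ∉ O := by simpa [mem_some_image] using hu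
        simpa using hPF.corr_sub u hu' hw
    -- irrefl
    · rintro (_ | u) h
      · exact h
      · exact hPF.irrefl u h
    -- trans
    · rintro (_ | a) (_ | b) (_ | d) h1 h2
      · exact h1.elim
      · exact h1.elim
      · exact hPF.irrefl x (hPF.trans h1 h2)
      · exact hPF.trans h1 h2
      · exact h2.elim
      · exact hPF.trans h1 h2
      · exact hPF.trans h1 h2
      · exact hPF.trans h1 h2
    -- p1
    · rintro (_ | u) hu (_ | w) hw hwO hne hlw <;> simp only [Option.elim_none, Option.elim_some] at hw
      · exact absurd rfl hne
      · simp at hw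
        have hwO' : w ∉ O := by simpa [mem_some_image] using hwO
        exact hPF.p1 x hx w hw hwO' (by rintro rfl; exact hxc hw) hlw
      · simp at hw
      · simp at hw
        have hu' : u ∉ O := by simpa [mem_some_image] using hu
        have hwO' : w ∉ O := by simpa [mem_some_image] using hwO
        exact hPF.p1 u hu' w hw hwO' (fun h => hne (congrArg some h)) hlw
    -- p2
    · rintro (_ | u) hu (_ | w) hw hwO hne hlw <;> simp only [Option.elim_none, Option.elim_some] at hw
      · exact absurd rfl hne
      · have hwO' : w ∉ O := by simpa [mem_some_image] using hwO
        by_cases hwx : w = x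
        · subst hwx
          rw [odd_some_insert_eq] at hw
          exact absurd hxodd hw
        · rw [odd_some_insert_ne G x _ w hwx] at hw
          exact hPF.p2 x hx w hw hwO' (Ne.symm hwx) hlw
      · rw [odd_none_iff'] at hw
        simp only [mem_some_image] at hw
        have hu' : u ∉ O := by simpa [mem_some_image] using hu
        exact hkey u hu' hw
      · rw [odd_some_iff] at hw
        have hu' : u ∉ O := by simpa [mem_some_image] using hu
        have hwO' : w ∉ O := by simpa [mem_some_image] using hwO
        exact hPF.p2 u hu' w hw hwO' (fun h => hne (congrArg some h)) hlw
    -- p3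
    · rintro (_ | u) hu (_ | w) hwO hnp hne hY <;> simp only [Option.elim_none, Option.elim_some]
      · exact absurd hY (by simp [insertLab])
      · have hwO' : w ∉ O := by simpa [mem_some_image] using hwO
        have hY' : lab w = MLabel.Y := hY
        have hwx : w ≠ x := by rintro rfl; rw [hlx] at hY'; exact MLabel.noConfusion hY'
        rw [codd_some_insert_ne G x _ w hwx]
        exact hPF.p3 x hx w hwO' hnp (Ne.symm hwx) hY'
      · exact absurd hY (by simp [insertLab])
      · have hu' : u ∉ O := by simpa [mem_some_image] using hu
        have hwO' : w ∉ O := by simpa [mem_some_image] using hwO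
        rw [codd_some_iff]
        exact hPF.p3 u hu' w hwO' hnp (fun h => hne (congrArg some h)) hY
    -- p4
    · rintro (_ | u) hu hY <;> simp only [Option.elim_none, Option.elim_some]
      · exact absurd hY (by simp [insertLab])
      · have hu' : u ∉ O := by simpa [mem_some_image] using hu
        obtain ⟨h1, h2⟩ := hPF.p4 u hu' hY
        refine ⟨by simpa [mem_some_image] using h1, ?_⟩
        rw [odd_some_iff]; exact h2
    -- p5
    · rintro (_ | u) hu hY <;> simp only [Option.elim_none, Option.elim_some]
      · exact absurd hY (by simp [insertLab])
      · have hu' : u ∉ O := by simpa [mem_some_image] using hu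
        obtain ⟨h1, h2⟩ := hPF.p5 u hu' hY
        refine ⟨by simpa [mem_some_image] using h1, ?_⟩
        rw [odd_some_iff]; exact h2
    -- p6
    · rintro (_ | u) hu hY <;> simp only [Option.elim_none, Option.elim_some]
      · refine ⟨Set.mem_insert _ _, ?_⟩
        rw [odd_none_iff']
        simpa [mem_some_image] using hxc
      · have hu' : u ∉ O := by simpa [mem_some_image] using hu
        obtain ⟨h1, h2⟩ := hPF.p6 u hu' hY
        refine ⟨by simpa [mem_some_image] using h1, ?_⟩
        rw [odd_some_iff]; exact h2
    -- p7
    · rintro (_ | u) hu hY <;> simp only [Option.elim_none, Option.elim_some]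
      · exact absurd hY (by simp [insertLab])
      · have hu' : u ∉ O := by simpa [mem_some_image] using hu
        rw [odd_some_iff]
        exact hPF.p7 u hu' hY
    -- p8
    · rintro (_ | u) hu hY <;> simp only [Option.elim_none, Option.elim_some]
      · exact absurd hY (by simp [insertLab])
      · have hu' : u ∉ O := by simpa [mem_some_image] using hu
        simpa [mem_some_image] using hPF.p8 u hu' hY
    -- p9
    · rintro (_ | u) hu hY <;> simp only [Option.elim_none, Option.elim_some]
      · exact absurd hY (by simp [insertLab])
      · have hu' : u ∉ O := by simpa [mem_some_image] using hu
        rw [codd_some_iff]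
        exact hPF.p9 u hu' hY
  · rintro (_ | v) hv
    · refine ⟨?_, ?_, ?_⟩
      · rintro (_ | w) ⟨⟨hwO, hwn⟩, hwA⟩ <;> simp only [Option.elim_none, Option.elim_some] at hwA
        · exact absurd rfl hwn
        · simp only [Set.mem_insert_iff, mem_some_image] at hwA
          have hwA' : w ∈ c x := by
            rcases hwA with h | h
            · exact absurd h (by simp)
            · exact h
          have hwO' : w ∉ O := by simpa [mem_some_image] using hwO
          have hwx : w ≠ x := by rintro rfl; exact hxc hwA'
          exact (hfoc x hx).1 w ⟨⟨hwO', by simpa using hwx⟩, hwA'⟩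
      · rintro (_ | w) ⟨⟨hwO, hwn⟩, hwA⟩ <;> simp only [Option.elim_none, Option.elim_some] at hwA
        · exact absurd rfl hwn
        · have hwO' : w ∉ O := by simpa [mem_some_image] using hwO
          by_cases hwx : w = x
          · subst hwx
            rw [odd_some_insert_eq] at hwA
            exact absurd hxodd hwA
          · rw [odd_some_insert_ne G x _ w hwx] at hwA
            exact (hfoc x hx).2.1 w ⟨⟨hwO', by simpa using hwx⟩, hwA⟩
      · rintro (_ | w) ⟨hwO, hwn⟩ hY <;> simp only [Option.elim_none, Option.elim_some]
        · exact absurd hY (by simp [insertLab])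
        · have hwO' : w ∉ O := by simpa [mem_some_image] using hwO
          have hY' : lab w = MLabel.Y := hY
          have hwx : w ≠ x := by rintro rfl; rw [hlx] at hY'; exact MLabel.noConfusion hY'
          rw [codd_some_insert_ne G x _ w hwx]
          exact (hfoc x hx).2.2 w ⟨hwO', by simpa using hwx⟩ hY'
    · have hv' : v ∉ O := by simpa [mem_some_image] using hv
      refine ⟨?_, ?_, ?_⟩
      · rintro (_ | w) ⟨⟨hwO, hwn⟩, hwA⟩ <;> simp only [Option.elim_none, Option.elim_some] at hwA
        · exact absurd hwA (by simp)
        · simp only [mem_some_image] at hwA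
          have hwO' : w ∉ O := by simpa [mem_some_image] using hwO
          have hwv : w ≠ v := by
            rintro rfl; exact hwn rfl
          exact (hfoc v hv').1 w ⟨⟨hwO', by simpa using hwv⟩, hwA⟩
      · rintro (_ | w) ⟨⟨hwO, hwn⟩, hwA⟩ <;> simp only [Option.elim_none, Option.elim_some] at hwA
        · show insertLab lab MLabel.YZ none ∈ _
          simp [insertLab]
        · rw [odd_some_iff] at hwA
          have hwO' : w ∉ O := by simpa [mem_some_image] using hwO
          have hwv : w ≠ v := by rintro rfl; exact hwn rfl
          exact (hfoc v hv').2.1 w ⟨⟨hwO', by simpa using hwv⟩, hwA⟩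
      · rintro (_ | w) ⟨hwO, hwn⟩ hY <;> simp only [Option.elim_none, Option.elim_some]
        · exact absurd hY (by simp [insertLab])
        · have hwO' : w ∉ O := by simpa [mem_some_image] using hwO
          have hwv : w ≠ v := by rintro rfl; exact hwn rfl
          rw [codd_some_iff]
          exact (hfoc v hv').2.2 w ⟨hwO', by simpa using hwv⟩ hY

end
end

section
/- Let Γ=(G,I,O,λ) be a labelled open graph, x ∈ V∖(I∪O) with λ(x)=XY, W ⊆ V∖{x}, and x',x'' fresh vertices. Let Γ₃ be obtained from Γ by first performing the YZ-insertion of x'' with neighbourhood {x} and then the YZ-insertion of x' with neighbourhood W∪{x''}. Let Γ₄ = (G₃∧x'x'', I, O, λ₄), where λ₄(x')=λ₄(x'')=XY (the pivot swaps the labels of x',x'' from YZ to XY) and λ₄ agrees with λ on V∖O. Then Γ₄ equals the vertex splitting of x over W: its graph is (V∪{x',x''}, E Δ {{x,x'},{x',x''}} Δ {{w,x} : w∈W} Δ {{w,x''} : w∈W}) and λ₄(x')=λ₄(x'')=XY, λ₄(v)=λ(v) otherwise. -/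
open scoped Classical
noncomputable section

variable {V : Type*}

/-- Local complementation about `u`: toggle all edges between distinct neighbours of `u`. -/
def localComp (G : SimpleGraph V) (u : V) : SimpleGraph V where
  Adj a b := (G.Adj a b ∧ ¬(G.Adj u a ∧ G.Adj u b)) ∨
             (¬G.Adj a b ∧ a ≠ b ∧ G.Adj u a ∧ G.Adj u b)
  symm := by
    constructor
    rintro a b (⟨hab, hn⟩ | ⟨hn, hne, ha, hb⟩)
    · exact Or.inl ⟨hab.symm, fun h => hn ⟨h.2, h.1⟩⟩
    · exact Or.inr ⟨fun h => hn h.symm, hne.symm, hb, ha⟩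
  loopless := by
    constructor
    rintro a (⟨hab, _⟩ | ⟨_, hne, _, _⟩)
    · exact G.loopless.irrefl a hab
    · exact hne rfl

/-- The pivot about the edge `{u,v}`: `G ∧ uv = G ⋆ u ⋆ v ⋆ u`. -/
def pivotG (G : SimpleGraph V) (u v : V) : SimpleGraph V :=
  localComp (localComp (localComp G u) v) u

/-- The closed neighbourhood `N_G[u] = N_G(u) Δ {u}`. -/
def closedNbhd (G : SimpleGraph V) (u : V) : Set V :=
  symmDiff (G.neighborSet u) {u}

/-- The graph of the vertex splitting of `x` over `W`: the new vertices are
`x' = none` and `x'' = some none`, and the original vertex `v` is `some (some v)`. -/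
def splitGraph (G : SimpleGraph V) (x : V) (W : Set V) :
    SimpleGraph (Option (Option V)) where
  Adj a b := match a, b with
    | some (some a), some (some b) =>
        (G.Adj a b ∧ ¬((a = x ∧ b ∈ W) ∨ (b = x ∧ a ∈ W))) ∨
        (¬G.Adj a b ∧ a ≠ b ∧ ((a = x ∧ b ∈ W) ∨ (b = x ∧ a ∈ W)))
    | some (some a), some none => a ∈ W
    | some none, some (some b) => b ∈ W
    | some (some a), none => a = x
    | none, some (some b) => b = x
    | some none, none => True
    | none, some none => True
    | none, none => False
    | some none, some none => False
  symm := by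
    constructor
    rintro (_ | (_ | a)) (_ | (_ | b)) h
    · exact h
    · exact h
    · exact h
    · exact h
    · exact h
    · exact h
    · exact h
    · exact h
    · rcases h with ⟨hab, hn⟩ | ⟨hn, hne, hc⟩
      · exact Or.inl ⟨hab.symm, fun hh => hn hh.symm⟩
      · exact Or.inr ⟨fun hh => hn hh.symm, hne.symm, hc.symm⟩
  loopless := by
    constructor
    rintro (_ | (_ | a)) h
    · exact h
    · exact h
    · rcases h with ⟨hab, _⟩ | ⟨_, hne, _⟩
      · exact G.loopless.irrefl a hab
      · exact hne rfl


/-- The measurement labelling of the vertex splitting: the two new vertices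
`x' = none` and `x'' = some none` are XY-measured, all other labels unchanged. -/
def splitLab (lab : V → MLabel) : Option (Option V) → MLabel
  | some (some v) => lab v
  | _ => MLabel.XY

section Aux
variable {V : Type*}

lemma localComp_adj (G : SimpleGraph V) (u a b : V) :
    (localComp G u).Adj a b ↔
      ((G.Adj a b ∧ ¬(G.Adj u a ∧ G.Adj u b)) ∨
       (¬G.Adj a b ∧ a ≠ b ∧ G.Adj u a ∧ G.Adj u b)) := Iff.rfl

lemma insertGraph_ss (G : SimpleGraph V) (S : Set V) (a b : V) :
    (insertGraph G S).Adj (some a) (some b) ↔ G.Adj a b := Iff.rfl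
lemma insertGraph_sn (G : SimpleGraph V) (S : Set V) (a : V) :
    (insertGraph G S).Adj (some a) none ↔ a ∈ S := Iff.rfl
lemma insertGraph_ns (G : SimpleGraph V) (S : Set V) (b : V) :
    (insertGraph G S).Adj none (some b) ↔ b ∈ S := Iff.rfl
lemma insertGraph_nn (G : SimpleGraph V) (S : Set V) :
    (insertGraph G S).Adj none none ↔ False := Iff.rfl

lemma splitGraph_ss (G : SimpleGraph V) (x : V) (W : Set V) (a b : V) :
    (splitGraph G x W).Adj (some (some a)) (some (some b)) ↔
      ((G.Adj a b ∧ ¬((a = x ∧ b ∈ W) ∨ (b = x ∧ a ∈ W))) ∨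
       (¬G.Adj a b ∧ a ≠ b ∧ ((a = x ∧ b ∈ W) ∨ (b = x ∧ a ∈ W)))) := Iff.rfl
lemma splitGraph_s_sn (G : SimpleGraph V) (x : V) (W : Set V) (a : V) :
    (splitGraph G x W).Adj (some (some a)) (some none) ↔ a ∈ W := Iff.rfl
lemma splitGraph_sn_s (G : SimpleGraph V) (x : V) (W : Set V) (b : V) :
    (splitGraph G x W).Adj (some none) (some (some b)) ↔ b ∈ W := Iff.rfl
lemma splitGraph_s_n (G : SimpleGraph V) (x : V) (W : Set V) (a : V) :
    (splitGraph G x W).Adj (some (some a)) none ↔ a = x := Iff.rfl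
lemma splitGraph_n_s (G : SimpleGraph V) (x : V) (W : Set V) (b : V) :
    (splitGraph G x W).Adj none (some (some b)) ↔ b = x := Iff.rfl
lemma splitGraph_sn_n (G : SimpleGraph V) (x : V) (W : Set V) :
    (splitGraph G x W).Adj (some none) none ↔ True := Iff.rfl
lemma splitGraph_n_sn (G : SimpleGraph V) (x : V) (W : Set V) :
    (splitGraph G x W).Adj none (some none) ↔ True := Iff.rfl
lemma splitGraph_nn (G : SimpleGraph V) (x : V) (W : Set V) :
    (splitGraph G x W).Adj (none : Option (Option V)) none ↔ False := Iff.rfl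
lemma splitGraph_snsn (G : SimpleGraph V) (x : V) (W : Set V) :
    (splitGraph G x W).Adj (some none) (some none) ↔ False := Iff.rfl

end Aux

set_option maxHeartbeats 1600000 in
/-- vertex splitting of `x` over `W` is obtained by first
inserting a YZ-measured vertex `x'' = some none` with neighbourhood `{x}`, then
inserting a YZ-measured vertex `x' = none` with neighbourhood `W ∪ {x''}`, and
finally pivoting about the edge `{x', x''}` (which makes both new vertices
XY-measured): the resulting labelled open graph is exactly the vertex splitting
of `x` over `W`. -/
theorem vertex_splitting_via_insertions_and_pivot {V : Type*}
    (G : SimpleGraph V) (I O : Set V) (lab : V → MLabel)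
    (x : V) (hxI : x ∉ I) (hxO : x ∉ O) (hlx : lab x = MLabel.XY)
    (W : Set V) (hW : x ∉ W) :
    pivotG (insertGraph (insertGraph G {x}) ((some '' W) ∪ {none}))
        (none : Option (Option V)) (some (none : Option V)) = splitGraph G x W ∧
    (splitLab lab (none : Option (Option V)) = MLabel.XY ∧
      splitLab lab (some (none : Option V)) = MLabel.XY ∧
      ∀ v : V, splitLab lab (some (some v)) = lab v) := by
  refine ⟨?_, rfl, rfl, fun v => rfl⟩
  ext a b
  have hne : ∀ {c d : V}, G.Adj c d → c ≠ d := fun h => G.ne_of_adj h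
  rcases a with _ | _ | a <;> rcases b with _ | _ | b <;>
    simp only [pivotG, localComp_adj, insertGraph_ss, insertGraph_sn, insertGraph_ns,
      insertGraph_nn, splitGraph_ss, splitGraph_s_sn, splitGraph_sn_s, splitGraph_s_n,
      splitGraph_n_s, splitGraph_sn_n, splitGraph_n_sn, splitGraph_nn, splitGraph_snsn,
      Set.mem_union, Set.mem_image, Set.mem_singleton_iff, Option.some.injEq,
      reduceCtorEq, exists_eq_right, or_false, false_or, and_true, true_and,
      not_false_eq_true, and_false, false_and, not_true_eq_false, iff_true, iff_false,
      SimpleGraph.irrefl, ne_eq, not_false_iff]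
  case' some.some.some.some =>
    by_cases hab : a = b
    · subst hab
      simp [G.irrefl]
    · by_cases hax : a = x <;> by_cases hbx : b = x <;>
        by_cases haw : a ∈ W <;> by_cases hbw : b ∈ W <;>
        simp_all <;> tauto
  all_goals tauto

end
end
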